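/- arXiv:1310.5642 — 3 statements merged into one kernel-verified Lean document; each statement's English description precedes it below -/
import Mathlib

section
/- Let E be a real normed vector space, p a seminorm on E, K ≥ 0, and B : E × E → E an ℝ-bilinear map such that ‖B(v,w)‖ ≤ K ‖v‖ p(w) for all v, w ∈ E. Let N ∈ ℕ and u_0, …, u_N ∈ E satisfy the recursion u_{j+1} = (1/(j+1)) Σ_{ℓ=0}^{j} B(u_ℓ, u_{j−ℓ}) for j = 0, …, N−1, and set u^N(t) = Σ_{j=0}^N u_j t^j. Then for every t ≥ 0, ‖(d u^N/dt)(t) − B(u^N(t), u^N(t))‖ ≤ ε(t), where ε(t) := K Σ_{j=N}^{2N} [ Σ_{ℓ=j−N}^{N} ‖u_ℓ‖ p(u_{j−ℓ}) ] t^j. -/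
/-!
Differentiating `u^N(t) = ∑_{j ≤ N} t^j u_j` termwise and using the recursion, `(u^N)'(t)` is
the part of degree `< N` of the Cauchy product `B(u^N(t), u^N(t))`. Their difference is therefore
the part of degree `N, …, 2N` of that product, which the bound on `B` estimates termwise.
-/

open Finset

theorem sum_product_range_eq_sum_range_sum_Icc {M : Type*} [AddCommMonoid M] (n : ℕ)
    (f : ℕ → ℕ → M) :
    ∑ x ∈ range (n + 1) ×ˢ range (n + 1), f (x.1 + x.2) x.1 =
      ∑ m ∈ range (2 * n + 1), ∑ ℓ ∈ Icc (m - n) (min m n), f m ℓ := by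
  rw [sum_sigma']
  refine sum_nbij' (fun x => ⟨x.1 + x.2, x.1⟩) (fun x => (x.2, x.1 - x.2)) ?_ ?_ ?_ ?_ ?_
  · intro x hx
    simp only [mem_product, mem_range] at hx
    simp only [mem_sigma, mem_range, mem_Icc, le_min_iff]
    omega
  · intro x hx
    simp only [mem_sigma, mem_range, mem_Icc, le_min_iff] at hx
    simp only [mem_product, mem_range]
    omega
  · intro x _
    simp
  · rintro ⟨m, ℓ⟩ hx
    simp only [mem_sigma, mem_range, mem_Icc, le_min_iff] at hx
    simp only [Sigma.mk.injEq, heq_eq_eq, and_true]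
    omega
  · exact fun _ _ => rfl

theorem sum_range_sum_Icc_eq_add {M : Type*} [AddCommMonoid M] (n : ℕ) (g : ℕ → ℕ → M) :
    ∑ m ∈ range (2 * n + 1), ∑ ℓ ∈ Icc (m - n) (min m n), g m ℓ =
      ∑ m ∈ range n, ∑ ℓ ∈ range (m + 1), g m ℓ +
        ∑ m ∈ Icc n (2 * n), ∑ ℓ ∈ Icc (m - n) n, g m ℓ := by
  rw [range_eq_Ico, ← sum_Ico_consecutive _ (Nat.zero_le n) (by omega : n ≤ 2 * n + 1),
    Ico_add_one_right_eq_Icc, ← range_eq_Ico]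
  congr 1
  · refine sum_congr rfl fun m hm => ?_
    have hm : m < n := mem_range.1 hm
    rw [Nat.sub_eq_zero_of_le hm.le, min_eq_left hm.le, range_eq_Ico, Ico_add_one_right_eq_Icc]
  · refine sum_congr rfl fun m hm => ?_
    rw [min_eq_right (mem_Icc.1 hm).1]

theorem LinearMap.map_sum_pow_smul_sum_pow_smul {R M N P : Type*} [CommSemiring R]
    [AddCommMonoid M] [AddCommMonoid N] [AddCommMonoid P] [Module R M] [Module R N]
    [Module R P] (B : M →ₗ[R] N →ₗ[R] P) (n : ℕ) (t : R) (a : ℕ → M) (b : ℕ → N) :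
    B (∑ i ∈ Finset.range (n + 1), t ^ i • a i) (∑ j ∈ Finset.range (n + 1), t ^ j • b j) =
      ∑ m ∈ Finset.range n, t ^ m • ∑ ℓ ∈ Finset.range (m + 1), B (a ℓ) (b (m - ℓ)) +
        ∑ m ∈ Finset.Icc n (2 * n), t ^ m • ∑ ℓ ∈ Finset.Icc (m - n) n, B (a ℓ) (b (m - ℓ)) := by
  have hprod := sum_product_range_eq_sum_range_sum_Icc n fun m ℓ => t ^ m • B (a ℓ) (b (m - ℓ))
  simp only [Nat.add_sub_cancel_left] at hprod
  simp only [map_sum, LinearMap.sum_apply, map_smul, LinearMap.smul_apply, smul_sum, smul_smul]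
  rw [sum_comm, ← sum_product', ← sum_range_sum_Icc_eq_add, ← hprod]
  refine sum_congr rfl fun x _ => ?_
  rw [pow_add, mul_comm]

theorem hasDerivAt_sum_range_pow_smul {𝕜 F : Type*} [NontriviallyNormedField 𝕜]
    [NormedAddCommGroup F] [NormedSpace 𝕜 F] (n : ℕ) (c : ℕ → F) (t : 𝕜) :
    HasDerivAt (fun s => ∑ j ∈ range (n + 1), s ^ j • c j)
      (∑ m ∈ range n, t ^ m • ((m : 𝕜) + 1) • c (m + 1)) t := by
  convert HasDerivAt.fun_sum fun j _ => (hasDerivAt_pow j t).smul_const (c j) using 1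
  rw [sum_range_succ']
  simp [smul_smul, mul_comm]

theorem norm_sum_pow_smul_le {F : Type*} [SeminormedAddCommGroup F] [NormedSpace ℝ F]
    (s : Finset ℕ) {t : ℝ} (ht : 0 ≤ t) (x : ℕ → F) :
    ‖∑ m ∈ s, t ^ m • x m‖ ≤ ∑ m ∈ s, ‖x m‖ * t ^ m := by
  refine (norm_sum_le _ _).trans (sum_le_sum fun m _ => ?_)
  rw [norm_smul, Real.norm_of_nonneg (pow_nonneg ht m), mul_comm]

theorem polynomial_differential_error_estimate_general
    (E : Type*) [NormedAddCommGroup E] [NormedSpace ℝ E]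
    (p : Seminorm ℝ E) (K : ℝ)
    (B : E →ₗ[ℝ] E →ₗ[ℝ] E)
    (hB : ∀ v w : E, ‖B v w‖ ≤ K * ‖v‖ * p w)
    (N : ℕ) (u : ℕ → E)
    (hrec : ∀ j < N,
      u (j + 1) = ((j : ℝ) + 1)⁻¹ • ∑ ℓ ∈ Finset.range (j + 1), B (u ℓ) (u (j - ℓ)))
    (uN : ℝ → E) (huN : ∀ t : ℝ, uN t = ∑ j ∈ Finset.range (N + 1), t ^ j • u j) :
    ∀ t : ℝ, 0 ≤ t →
      ‖deriv uN t - B (uN t) (uN t)‖ ≤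
        K * ∑ j ∈ Finset.Icc N (2 * N),
          (∑ ℓ ∈ Finset.Icc (j - N) N, ‖u ℓ‖ * p (u (j - ℓ))) * t ^ j := by
  intro t ht
  have hderiv : deriv uN t = ∑ m ∈ range N, t ^ m • ∑ ℓ ∈ range (m + 1), B (u ℓ) (u (m - ℓ)) := by
    rw [funext huN, (hasDerivAt_sum_range_pow_smul N u t).deriv]
    refine sum_congr rfl fun m hm => ?_
    rw [hrec m (mem_range.1 hm), smul_inv_smul₀ (by positivity)]
  have hcoeff (m : ℕ) : ‖∑ ℓ ∈ Icc (m - N) N, B (u ℓ) (u (m - ℓ))‖ ≤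
      K * ∑ ℓ ∈ Icc (m - N) N, ‖u ℓ‖ * p (u (m - ℓ)) := by
    refine (norm_sum_le _ _).trans ?_
    rw [mul_sum]
    gcongr with ℓ
    rw [← mul_assoc]
    exact hB _ _
  rw [hderiv, huN, B.map_sum_pow_smul_sum_pow_smul, sub_add_cancel_left, norm_neg, mul_sum]
  refine (norm_sum_pow_smul_le _ ht _).trans (sum_le_sum fun m _ => ?_)
  rw [← mul_assoc]
  gcongr
  exact hcoeff m

/-- If `‖B(v,w)‖ ≤ K ‖v‖ p(w)` and the coefficients of
`u^N(t) = ∑_{j=0}^N u_j t^j` satisfy the Taylor recursion, then for all `t ≥ 0` the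
differential error is bounded by
`ε(t) = K ∑_{j=N}^{2N} [∑_{ℓ=j−N}^{N} ‖u_ℓ‖ p(u_{j−ℓ})] t^j`. -/
theorem polynomial_differential_error_estimate
    (E : Type*) [NormedAddCommGroup E] [NormedSpace ℝ E]
    (p : Seminorm ℝ E) (K : ℝ) (hK : 0 ≤ K)
    (B : E →ₗ[ℝ] E →ₗ[ℝ] E)
    (hB : ∀ v w : E, ‖B v w‖ ≤ K * ‖v‖ * p w)
    (N : ℕ) (u : ℕ → E)
    (hrec : ∀ j < N,
      u (j + 1) = ((j : ℝ) + 1)⁻¹ • ∑ ℓ ∈ Finset.range (j + 1), B (u ℓ) (u (j - ℓ)))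
    (uN : ℝ → E) (huN : ∀ t : ℝ, uN t = ∑ j ∈ Finset.range (N + 1), t ^ j • u j) :
    ∀ t : ℝ, 0 ≤ t →
      ‖deriv uN t - B (uN t) (uN t)‖ ≤
        K * ∑ j ∈ Finset.Icc N (2 * N),
          (∑ ℓ ∈ Finset.Icc (j - N) N, ‖u ℓ‖ * p (u (j - ℓ))) * t ^ j :=
  polynomial_differential_error_estimate_general E p K B hB N u hrec uN huN
end

section
/- Let H be a real inner product space, p a seminorm on H, K, G ≥ 0, and B : H × H → H an ℝ-bilinear map such that ‖B(v,w)‖ ≤ K ‖v‖ p(w) and |⟨B(v,w), w⟩| ≤ G ‖v‖ ‖w‖² for all v, w ∈ H. Let T ∈ (0, +∞] and let u, uₐ : [0,T) → H be differentiable curves and f, e : [0,T) → H functions such that u'(t) = B(u(t), u(t)) + f(t) and uₐ'(t) = B(uₐ(t), uₐ(t)) + f(t) + e(t) for all t ∈ [0,T). Then for every t ∈ [0,T), the right upper Dini derivative of the function t ↦ ‖u(t) − uₐ(t)‖ satisfies d⁺‖u − uₐ‖(t) ≤ (G ‖uₐ(t)‖ + K p(uₐ(t))) ‖u(t) − uₐ(t)‖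 + G ‖u(t) − uₐ(t)‖² + ‖e(t)‖. -/
/-!
Write `w = u - uₐ`; then `w' = B(w,w) + B(w,uₐ) + B(uₐ,w) - e`. The Dini derivative of `‖w‖` is
an honest right derivative: `⟪w, w'⟫ / ‖w‖` where `w(t) ≠ 0`, and `‖w'‖ = ‖e‖` where `w(t) = 0`.
In the first case the Kato inequality controls `B(w,w)` and `B(uₐ,w)` against `w`, and the basic
inequality controls `B(w,uₐ)`.
-/

/-- The right upper Dini derivative `d⁺g(t) = limsup_{h→0⁺} (g(t+h) − g(t))/h`,
with values in the extended reals. -/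
noncomputable def diniDerivPlus (g : ℝ → ℝ) (t : ℝ) : EReal :=
  Filter.limsup (fun h : ℝ => (((g (t + h) - g t) / h : ℝ) : EReal))
    (nhdsWithin 0 (Set.Ioi 0))

open Filter Set Topology RealInnerProductSpace

theorem diniDerivPlus_eq_of_hasDerivWithinAt {g : ℝ → ℝ} {g' t : ℝ}
    (hg : HasDerivWithinAt g g' (Ici t) t) : diniDerivPlus g t = g' := by
  have hslope : Tendsto (slope g t) (𝓝[>] t) (𝓝 g') :=
    (hasDerivWithinAt_iff_tendsto_slope' self_notMem_Ioi).1 (hasDerivWithinAt_Ioi_iff_Ici.2 hg)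
  have hshift : Tendsto (t + ·) (𝓝[>] (0 : ℝ)) (𝓝[>] t) := by
    rw [Tendsto, map_add_left_nhdsGT, add_zero]
  have hquot : Tendsto (fun h => (g (t + h) - g t) / h) (𝓝[>] 0) (𝓝 g') := by
    refine (hslope.comp hshift).congr fun h => ?_
    simp [slope_def_field]
  exact ((continuous_coe_real_ereal.tendsto g').comp hquot).limsup_eq

theorem HasDerivWithinAt.norm_of_eq_zero {E : Type*} [NormedAddCommGroup E] [NormedSpace ℝ E]
    {w : ℝ → E} {w' : E} {t : ℝ}
    (hw : HasDerivWithinAt w w' (Ici t) t) (h0 : w t = 0) :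
    HasDerivWithinAt (‖w ·‖) ‖w'‖ (Ici t) t := by
  rw [← hasDerivWithinAt_Ioi_iff_Ici] at hw ⊢
  rw [hasDerivWithinAt_iff_tendsto_slope' self_notMem_Ioi] at hw ⊢
  refine hw.norm.congr' (eventually_nhdsWithin_of_forall fun s (hs : t < s) => ?_)
  rw [slope_def_field, slope, h0, vsub_eq_sub, sub_zero, norm_zero, sub_zero, norm_smul, norm_inv,
    Real.norm_of_nonneg (sub_nonneg.2 hs.le), div_eq_inv_mul]

theorem HasDerivWithinAt.norm_of_ne_zero {E : Type*} [NormedAddCommGroup E] [InnerProductSpace ℝ E]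
    {w : ℝ → E} {w' : E} {s : Set ℝ} {t : ℝ}
    (hw : HasDerivWithinAt w w' s t) (h0 : w t ≠ 0) :
    HasDerivWithinAt (‖w ·‖) (⟪w t, w'⟫ / ‖w t‖) s t := by
  have := hw.norm_sq.sqrt (pow_ne_zero 2 (norm_ne_zero_iff.2 h0))
  simp only [Real.sqrt_sq (norm_nonneg _)] at this
  convert this using 1
  field_simp

theorem diniDerivPlus_norm_le {E : Type*} [NormedAddCommGroup E] [InnerProductSpace ℝ E]
    {w : ℝ → E} {w' : E} {t R : ℝ} (hw : HasDerivWithinAt w w' (Ici t) t)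
    (hinner : ⟪w', w t⟫ ≤ R * ‖w t‖) (hzero : w t = 0 → ‖w'‖ ≤ R) :
    diniDerivPlus (‖w ·‖) t ≤ R := by
  by_cases h0 : w t = 0
  · rw [diniDerivPlus_eq_of_hasDerivWithinAt (hw.norm_of_eq_zero h0)]
    exact_mod_cast hzero h0
  · rw [diniDerivPlus_eq_of_hasDerivWithinAt (hw.norm_of_ne_zero h0), EReal.coe_le_coe_iff,
      div_le_iff₀ (norm_pos_iff.2 h0), real_inner_comm]
    exact hinner

theorem inner_apply_self_sub_apply_self_le {H : Type*} [NormedAddCommGroup H]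
    [InnerProductSpace ℝ H] (p : Seminorm ℝ H) {K G : ℝ} {B : H →ₗ[ℝ] H →ₗ[ℝ] H}
    (hB1 : ∀ v w : H, ‖B v w‖ ≤ K * ‖v‖ * p w)
    (hB2 : ∀ v w : H, |⟪B v w, w⟫| ≤ G * ‖v‖ * ‖w‖ ^ 2) (x y : H) :
    ⟪B x x - B y y, x - y⟫ ≤ ((G * ‖y‖ + K * p y) * ‖x - y‖ + G * ‖x - y‖ ^ 2) * ‖x - y‖ := by
  set w := x - y
  have hsplit : B x x - B y y = B w w + B w y + B y w := by
    simp only [w, map_sub, LinearMap.sub_apply]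
    abel
  have hww : ⟪B w w, w⟫ ≤ G * ‖w‖ * ‖w‖ ^ 2 := (le_abs_self _).trans (hB2 w w)
  have hyw : ⟪B y w, w⟫ ≤ G * ‖y‖ * ‖w‖ ^ 2 := (le_abs_self _).trans (hB2 y w)
  have hwy : ⟪B w y, w⟫ ≤ K * ‖w‖ * p y * ‖w‖ :=
    (real_inner_le_norm _ _).trans (mul_le_mul_of_nonneg_right (hB1 w y) (norm_nonneg w))
  rw [hsplit, inner_add_left, inner_add_left]
  linear_combination hww + hwy + hyw

theorem setOf_nonneg_coe_lt_mem_nhdsGE {T : EReal} {t : ℝ} (ht : 0 ≤ t ∧ (t : EReal) < T) :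
    {s : ℝ | 0 ≤ s ∧ (s : EReal) < T} ∈ 𝓝[≥] t :=
  inter_mem (mem_of_superset self_mem_nhdsWithin (Ici_subset_Ici.2 ht.1))
    (mem_nhdsWithin_of_mem_nhds ((isOpen_Iio.preimage continuous_coe_real_ereal).mem_nhds ht.2))

theorem dini_derivative_of_error_norm_general
    (H : Type*) [NormedAddCommGroup H] [InnerProductSpace ℝ H]
    (p : Seminorm ℝ H) (K G : ℝ)
    (B : H →ₗ[ℝ] H →ₗ[ℝ] H)
    (hB1 : ∀ v w : H, ‖B v w‖ ≤ K * ‖v‖ * p w)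
    (hB2 : ∀ v w : H, |(inner ℝ (B v w) w : ℝ)| ≤ G * ‖v‖ * ‖w‖ ^ 2)
    (T : EReal)
    (D : Set ℝ) (hD : D = {t : ℝ | 0 ≤ t ∧ (t : EReal) < T})
    (u ua f e : ℝ → H)
    (hu : ∀ t ∈ D, HasDerivWithinAt u (B (u t) (u t) + f t) D t)
    (hua : ∀ t ∈ D, HasDerivWithinAt ua (B (ua t) (ua t) + f t + e t) D t) :
    ∀ t ∈ D,
      diniDerivPlus (fun s => ‖u s - ua s‖) t ≤
        (((G * ‖ua t‖ + K * p (ua t)) * ‖u t - ua t‖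
            + G * ‖u t - ua t‖ ^ 2 + ‖e t‖ : ℝ) : EReal) := by
  intro t ht
  have hDt : D ∈ 𝓝[≥] t := by subst hD; exact setOf_nonneg_coe_lt_mem_nhdsGE ht
  have herr : HasDerivWithinAt (u - ua) (B (u t) (u t) - B (ua t) (ua t) - e t) (Ici t) t :=
    (((hu t ht).sub (hua t ht)).mono_of_mem_nhdsWithin hDt).congr_deriv (by abel)
  refine diniDerivPlus_norm_le herr ?_ fun h0 => ?_
  · have hkato := inner_apply_self_sub_apply_self_le p hB1 hB2 (u t) (ua t)
    have he : -⟪e t, u t - ua t⟫ ≤ ‖e t‖ * ‖u t - ua t‖ :=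
      (neg_le_abs _).trans (abs_real_inner_le_norm _ _)
    rw [inner_sub_left]
    linarith
  · have hsame : u t = ua t := sub_eq_zero.1 h0
    simp [hsame]

/-- if `B` satisfies the basic inequality `‖B(v,w)‖ ≤ K ‖v‖ p(w)` and the
Kato inequality `|⟨B(v,w), w⟩| ≤ G ‖v‖ ‖w‖²`, `u` solves `u' = B(u,u) + f` and `uₐ`
solves `uₐ' = B(uₐ,uₐ) + f + e` on `[0,T)`, then the right upper Dini derivative of
`t ↦ ‖u(t) − uₐ(t)‖` satisfies the stated differential inequality. -/
theorem dini_derivative_of_error_norm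
    (H : Type*) [NormedAddCommGroup H] [InnerProductSpace ℝ H]
    (p : Seminorm ℝ H) (K G : ℝ) (hK : 0 ≤ K) (hG : 0 ≤ G)
    (B : H →ₗ[ℝ] H →ₗ[ℝ] H)
    (hB1 : ∀ v w : H, ‖B v w‖ ≤ K * ‖v‖ * p w)
    (hB2 : ∀ v w : H, |(inner ℝ (B v w) w : ℝ)| ≤ G * ‖v‖ * ‖w‖ ^ 2)
    (T : EReal) (hT : 0 < T)
    (D : Set ℝ) (hD : D = {t : ℝ | 0 ≤ t ∧ (t : EReal) < T})
    (u ua f e : ℝ → H)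
    (hu : ∀ t ∈ D, HasDerivWithinAt u (B (u t) (u t) + f t) D t)
    (hua : ∀ t ∈ D, HasDerivWithinAt ua (B (ua t) (ua t) + f t + e t) D t) :
    ∀ t ∈ D,
      diniDerivPlus (fun s => ‖u s - ua s‖) t ≤
        (((G * ‖ua t‖ + K * p (ua t)) * ‖u t - ua t‖
            + G * ‖u t - ua t‖ ^ 2 + ‖e t‖ : ℝ) : EReal) :=
  dini_derivative_of_error_norm_general H p K G B hB1 hB2 T D hD u ua f e hu hua
end

section
/- Let H be a real inner product space, p a seminorm on H, K, G ≥ 0, and B : H × H → H an ℝ-bilinear map such that ‖B(v,w)‖ ≤ K ‖v‖ p(w) and |⟨B(v,w), w⟩| ≤ G ‖v‖ ‖w‖² for all v, w ∈ H. Let T ∈ (0, +∞], 0 < T_c ≤ T, let u, uₐ : [0,T) → H be differentiable curves and f, e : [0,T) → H such that u'(t) = B(u(t), u(t)) + f(t) and uₐ'(t) = B(uₐ(t), uₐ(t)) + f(t) + e(t) for all t ∈ [0,T). Suppose 𝒟, 𝒟₊ , ε : [0,T) → [0,∞) are continuous with ‖uₐ(t)‖ ≤ 𝒟(t), p(uₐ(t))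 ≤ 𝒟₊(t) and ‖e(t)‖ ≤ ε(t) for all t, and that R : [0,T_c) → [0,∞) is continuous and satisfies the control inequalities d⁺R(t) ≥ (G 𝒟(t) + K 𝒟₊(t)) R(t) + G R(t)² + ε(t) for all t ∈ [0,T_c) and R(0) ≥ ‖u(0) − uₐ(0)‖, where d⁺ is the right upper Dini derivative. Then ‖u(t) − uₐ(t)‖ ≤ R(t) for all t ∈ [0,T_c). -/
/-!
Set `d = u - uₐ`. Bilinearity gives `d' = B(d,d) + B(d,uₐ) + B(uₐ,d) - e`, and the basic and Kato
inequalities bound `⟪d, d'⟫` by `‖d‖ F(t, ‖d‖)` with `F(t,x) = (G𝒟 + K𝒟₊) x + G x² + ε`, so the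
right upper Dini derivative of `‖d‖` is at most `F(t, ‖d‖)`, while that of `R` is at least
`F(t, R)`. Since `F(t, ·)` is Lipschitz near `R(t)`, uniformly on compact time intervals, the
comparison principle gives `‖d‖ ≤ R`: for every `δ > 0`, the function `‖d‖ - R` cannot cross the
barrier `δ e^{Mt}` once `M` exceeds the Lipschitz constant.
-/

open Set Filter Topology
open scoped RealInnerProductSpace

theorem frequently_lt_slope_of_lt_diniDerivPlus {g : ℝ → ℝ} {t r : ℝ}
    (h : (r : EReal) < diniDerivPlus g t) : ∃ᶠ s in 𝓝[>] t, r < slope g t s := by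
  have hshift : Tendsto (t + ·) (𝓝[>] 0) (𝓝[>] t) := by
    have h := (map_add_left_nhdsGT (c := t) (a := (0 : ℝ))).le
    rwa [add_zero] at h
  refine hshift.frequently ((frequently_lt_of_lt_limsup (by isBoundedDefault) h).mono ?_)
  intro h hh
  rw [slope_def_field, add_sub_cancel_left]
  exact_mod_cast hh

theorem HasDerivWithinAt.norm {E : Type*} [NormedAddCommGroup E] [InnerProductSpace ℝ E]
    {d : ℝ → E} {d' : E} {s : Set ℝ} {t : ℝ} (hd : HasDerivWithinAt d d' s t) (h0 : d t ≠ 0) :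
    HasDerivWithinAt (‖d ·‖) (⟪d t, d'⟫ / ‖d t‖) s t := by
  have h := hd.norm_sq.sqrt (pow_ne_zero 2 (norm_ne_zero_iff.2 h0))
  simpa only [Real.sqrt_sq (norm_nonneg _), mul_div_mul_left _ _ (two_ne_zero' ℝ)] using h

theorem eventually_slope_norm_lt {E : Type*} [NormedAddCommGroup E] [InnerProductSpace ℝ E]
    {d : ℝ → E} {d' : E} {t c r : ℝ} (hd : HasDerivWithinAt d d' (Ioi t) t)
    (hinner : ⟪d t, d'⟫ ≤ c * ‖d t‖) (hzero : d t = 0 → ‖d'‖ ≤ c) (hr : c < r) :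
    ∀ᶠ s in 𝓝[>] t, slope (‖d ·‖) t s < r := by
  by_cases h0 : d t = 0
  · filter_upwards [hd.limsup_slope_norm_le ((hzero h0).trans_lt hr), self_mem_nhdsWithin]
      with s hs hts
    rwa [Real.norm_eq_abs, abs_of_pos (sub_pos.2 hts)] at hs
  · have hc : ⟪d t, d'⟫ / ‖d t‖ < r :=
      ((div_le_iff₀ (norm_pos_iff.2 h0)).2 hinner).trans_lt hr
    exact (hd.norm h0).limsup_slope_le' (lt_irrefl t) hc

theorem frequently_slope_sub_lt {φ R : ℝ → ℝ} {t c c' r : ℝ}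
    (hφ : ∀ r, c < r → ∀ᶠ s in 𝓝[>] t, slope φ t s < r)
    (hR : ∀ r, r < c' → ∃ᶠ s in 𝓝[>] t, r < slope R t s) (hr : c - c' < r) :
    ∃ᶠ s in 𝓝[>] t, slope (φ - R) t s < r := by
  obtain ⟨θ, hθ, rfl⟩ : ∃ θ > 0, r = c - c' + 2 * θ := ⟨(r - (c - c')) / 2, by linarith, by ring⟩
  refine ((hφ (c + θ) (by linarith)).and_frequently (hR (c' - θ) (by linarith))).mono ?_
  rintro s ⟨hφs, hRs⟩
  rw [slope_def_field] at hφs hRs ⊢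
  rw [Pi.sub_apply, Pi.sub_apply, sub_sub_sub_comm, sub_div]
  linarith

theorem image_le_of_dini_comparison {φ R : ℝ → ℝ} {F : ℝ → ℝ → ℝ} {a b L : ℝ}
    (hφ : ContinuousOn φ (Icc a b)) (hR : ContinuousOn R (Icc a b))
    (hφ' : ∀ t ∈ Ico a b, ∀ r, F t (φ t) < r → ∀ᶠ s in 𝓝[>] t, slope φ t s < r)
    (hR' : ∀ t ∈ Ico a b, ∀ r, r < F t (R t) → ∃ᶠ s in 𝓝[>] t, r < slope R t s)
    (hF : ∀ t ∈ Ico a b, ∀ x ∈ Icc (R t) (R t + 1), F t x - F t (R t) ≤ L * (x - R t))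
    (ha : φ a ≤ R a) : ∀ ⦃t⦄, t ∈ Icc a b → φ t ≤ R t := by
  intro t ht
  set M := max L 0 + 1
  have hM : 0 ≤ M := by positivity
  -- the barrier stays below `1` on `[a, b]`, so that `hF` applies where `φ - R` touches it
  have barrier : ∀ δ, 0 < δ → δ * Real.exp (M * (b - a)) < 1 →
      φ t - R t ≤ δ * Real.exp (M * (t - a)) := by
    intro δ hδ hδ1
    refine image_le_of_liminf_slope_right_lt_deriv_boundary (hφ.sub hR)
      (f' := fun s => F s (φ s) - F s (R s)) (B := fun s => δ * Real.exp (M * (s - a)))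
      (B' := fun s => δ * (Real.exp (M * (s - a)) * M))
      (fun s hs _ hr => frequently_slope_sub_lt (hφ' s hs) (hR' s hs) hr) ?_ ?_ ?_ ht
    · simp only [Pi.sub_apply, sub_self, mul_zero, Real.exp_zero, mul_one]
      linarith
    · intro s
      simpa only [id, mul_one] using
        (((hasDerivAt_id s).sub_const a).const_mul M).exp.const_mul δ
    · intro s hs hs_eq
      set y := δ * Real.exp (M * (s - a))
      have hy : 0 < y := by positivity
      have hy1 : y ≤ 1 := by
        refine le_trans ?_ hδ1.le
        show δ * Real.exp (M * (s - a)) ≤ _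
        gcongr
        exact hs.2.le
      rw [Pi.sub_apply] at hs_eq
      have hFs := hF s hs (φ s) ⟨by linarith, by linarith⟩
      rw [hs_eq] at hFs
      have hL : L * y < y * M := by nlinarith [le_max_left L 0]
      show _ < δ * (Real.exp (M * (s - a)) * M)
      rw [← mul_assoc]
      linarith
  have hsmall : ∀ c : ℝ, Tendsto (· * c) (𝓝[>] 0) (𝓝 0) := fun c =>
    ((continuous_mul_const c).tendsto' 0 0 (zero_mul c)).mono_left nhdsWithin_le_nhds
  refine sub_nonpos.1 (ge_of_tendsto (hsmall (Real.exp (M * (t - a)))) ?_)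
  filter_upwards [self_mem_nhdsWithin,
    (hsmall (Real.exp (M * (b - a)))).eventually_lt_const one_pos] with δ hδ hδ1
  exact barrier δ hδ hδ1

theorem quadratic_sub_quadratic_le {A G ε r x L : ℝ} (hG : 0 ≤ G) (hx : x ∈ Icc r (r + 1))
    (hL : A + 2 * G * r + G ≤ L) :
    (A * x + G * x ^ 2 + ε) - (A * r + G * r ^ 2 + ε) ≤ L * (x - r) := by
  have hslope : A + G * (x + r) ≤ L := by nlinarith [mul_le_mul_of_nonneg_left hx.2 hG]
  calc (A * x + G * x ^ 2 + ε) - (A * r + G * r ^ 2 + ε) = (A + G * (x + r)) * (x - r) := by ring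
    _ ≤ L * (x - r) := mul_le_mul_of_nonneg_right hslope (sub_nonneg.2 hx.1)

theorem kato_energy_estimate {H : Type*} [NormedAddCommGroup H] [InnerProductSpace ℝ H]
    {p : Seminorm ℝ H} {K G : ℝ} (hK : 0 ≤ K) (hG : 0 ≤ G) {B : H →ₗ[ℝ] H →ₗ[ℝ] H}
    (hB1 : ∀ v w : H, ‖B v w‖ ≤ K * ‖v‖ * p w)
    (hB2 : ∀ v w : H, |⟪B v w, w⟫| ≤ G * ‖v‖ * ‖w‖ ^ 2)
    {u a e : H} {D Dp ε : ℝ} (ha : ‖a‖ ≤ D) (hpa : p a ≤ Dp) (he : ‖e‖ ≤ ε) :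
    ⟪u - a, B u u - B a a - e⟫ ≤
      ((G * D + K * Dp) * ‖u - a‖ + G * ‖u - a‖ ^ 2 + ε) * ‖u - a‖ := by
  set w := u - a
  have hsplit : B u u - B a a = B w w + B w a + B a w := by
    simp only [w, map_sub, LinearMap.sub_apply]
    abel
  have hww : ⟪w, B w w⟫ ≤ G * ‖w‖ * ‖w‖ ^ 2 := by
    rw [real_inner_comm]
    exact (le_abs_self _).trans (hB2 w w)
  have hwa : ⟪w, B w a⟫ ≤ ‖w‖ * (K * ‖w‖ * Dp) := by
    refine (real_inner_le_norm _ _).trans ?_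
    gcongr
    exact (hB1 w a).trans (by gcongr)
  have haw : ⟪w, B a w⟫ ≤ G * D * ‖w‖ ^ 2 := by
    rw [real_inner_comm]
    exact (le_abs_self _).trans ((hB2 a w).trans (by gcongr))
  have hwe : -⟪w, e⟫ ≤ ‖w‖ * ε :=
    (neg_le_abs _).trans ((abs_real_inner_le_norm w e).trans (by gcongr))
  rw [hsplit, inner_sub_right, inner_add_right, inner_add_right]
  linear_combination hww + hwa + haw + hwe
theorem aposteriori_error_bound_general
    (H : Type*) [NormedAddCommGroup H] [InnerProductSpace ℝ H]
    (p : Seminorm ℝ H) (K G : ℝ) (hK : 0 ≤ K) (hG : 0 ≤ G)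
    (B : H →ₗ[ℝ] H →ₗ[ℝ] H)
    (hB1 : ∀ v w : H, ‖B v w‖ ≤ K * ‖v‖ * p w)
    (hB2 : ∀ v w : H, |(inner ℝ (B v w) w : ℝ)| ≤ G * ‖v‖ * ‖w‖ ^ 2)
    (T Tc : EReal) (hTc : Tc ≤ T)
    (D : Set ℝ) (hD : D = {t : ℝ | 0 ≤ t ∧ (t : EReal) < T})
    (Dc : Set ℝ) (hDc : Dc = {t : ℝ | 0 ≤ t ∧ (t : EReal) < Tc})
    (u ua f e : ℝ → H)
    (hu : ∀ t ∈ D, HasDerivWithinAt u (B (u t) (u t) + f t) D t)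
    (hua : ∀ t ∈ D, HasDerivWithinAt ua (B (ua t) (ua t) + f t + e t) D t)
    (𝒟 𝒟p ε : ℝ → ℝ)
    (h𝒟c : ContinuousOn 𝒟 D) (h𝒟pc : ContinuousOn 𝒟p D)
    (h𝒟 : ∀ t ∈ D, ‖ua t‖ ≤ 𝒟 t) (h𝒟p : ∀ t ∈ D, p (ua t) ≤ 𝒟p t)
    (he : ∀ t ∈ D, ‖e t‖ ≤ ε t)
    (R : ℝ → ℝ) (hRc : ContinuousOn R Dc)
    (hRd : ∀ t ∈ Dc,
      (((G * 𝒟 t + K * 𝒟p t) * R t + G * R t ^ 2 + ε t : ℝ) : EReal) ≤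
        diniDerivPlus R t)
    (hR0 : ‖u 0 - ua 0‖ ≤ R 0) :
    ∀ t ∈ Dc, ‖u t - ua t‖ ≤ R t := by
  subst hD hDc
  rintro t₁ ⟨ht₁0, ht₁Tc⟩
  have hIccDc : ∀ s ∈ Icc 0 t₁, 0 ≤ s ∧ (s : EReal) < Tc := fun s hs =>
    ⟨hs.1, (EReal.coe_le_coe_iff.2 hs.2).trans_lt ht₁Tc⟩
  have hIccD : Icc 0 t₁ ⊆ {t : ℝ | 0 ≤ t ∧ (t : EReal) < T} := fun s hs =>
    ⟨hs.1, ((hIccDc s hs).2).trans_le hTc⟩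
  have hd : ∀ s ∈ Icc 0 t₁, HasDerivWithinAt (u - ua)
      (B (u s) (u s) - B (ua s) (ua s) - e s) (Icc 0 t₁) s := fun s hs => by
    convert ((hu s (hIccD hs)).sub (hua s (hIccD hs))).mono hIccD using 1
    abel
  obtain ⟨L, hL⟩ : BddAbove ((fun s => G * 𝒟 s + K * 𝒟p s + 2 * G * R s + G) '' Icc 0 t₁) :=
    isCompact_Icc.bddAbove_image ((((continuousOn_const.mul (h𝒟c.mono hIccD)).add
      (continuousOn_const.mul (h𝒟pc.mono hIccD))).add
      (continuousOn_const.mul (hRc.mono hIccDc))).add continuousOn_const)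
  refine image_le_of_dini_comparison (L := L)
    (F := fun s x => (G * 𝒟 s + K * 𝒟p s) * x + G * x ^ 2 + ε s)
    (fun s hs => (hd s hs).continuousWithinAt.norm) (hRc.mono hIccDc) ?_ ?_ ?_ hR0
    ⟨ht₁0, le_rfl⟩
  · intro s hs r hr
    have hsD := hIccD (Ico_subset_Icc_self hs)
    refine eventually_slope_norm_lt
      ((hd s (Ico_subset_Icc_self hs)).mono_of_mem_nhdsWithin (Icc_mem_nhdsGT_of_mem hs))
      (kato_energy_estimate hK hG hB1 hB2 (h𝒟 s hsD) (h𝒟p s hsD) (he s hsD)) (fun h0 => ?_) hr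
    rw [sub_eq_zero.1 h0]
    simpa using he s hsD
  · intro s hs r hr
    exact frequently_lt_slope_of_lt_diniDerivPlus
      ((EReal.coe_lt_coe_iff.2 hr).trans_le (hRd s (hIccDc s (Ico_subset_Icc_self hs))))
  · intro s hs x hx
    exact quadratic_sub_quadratic_le hG hx (hL (mem_image_of_mem _ (Ico_subset_Icc_self hs)))

/-- a-posteriori error bound, inviscid case: with `B` satisfying the basic
and Kato inequalities, `u` an exact solution and `uₐ` an approximate solution with error
`e` on `[0,T)`, growth estimators `𝒟, 𝒟₊` and error estimator `ε`, any continuous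
nonnegative `R` on `[0,T_c)` (`0 < T_c ≤ T`) satisfying the control inequalities bounds
the error: `‖u(t) − uₐ(t)‖ ≤ R(t)` on `[0,T_c)`. -/
theorem aposteriori_error_bound
    (H : Type*) [NormedAddCommGroup H] [InnerProductSpace ℝ H]
    (p : Seminorm ℝ H) (K G : ℝ) (hK : 0 ≤ K) (hG : 0 ≤ G)
    (B : H →ₗ[ℝ] H →ₗ[ℝ] H)
    (hB1 : ∀ v w : H, ‖B v w‖ ≤ K * ‖v‖ * p w)
    (hB2 : ∀ v w : H, |(inner ℝ (B v w) w : ℝ)| ≤ G * ‖v‖ * ‖w‖ ^ 2)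
    (T Tc : EReal) (hT : 0 < Tc) (hTc : Tc ≤ T)
    (D : Set ℝ) (hD : D = {t : ℝ | 0 ≤ t ∧ (t : EReal) < T})
    (Dc : Set ℝ) (hDc : Dc = {t : ℝ | 0 ≤ t ∧ (t : EReal) < Tc})
    (u ua f e : ℝ → H)
    (hu : ∀ t ∈ D, HasDerivWithinAt u (B (u t) (u t) + f t) D t)
    (hua : ∀ t ∈ D, HasDerivWithinAt ua (B (ua t) (ua t) + f t + e t) D t)
    (𝒟 𝒟p ε : ℝ → ℝ)
    (h𝒟c : ContinuousOn 𝒟 D) (h𝒟pc : ContinuousOn 𝒟p D) (hεc : ContinuousOn ε D)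
    (h𝒟0 : ∀ t ∈ D, 0 ≤ 𝒟 t) (h𝒟p0 : ∀ t ∈ D, 0 ≤ 𝒟p t) (hε0 : ∀ t ∈ D, 0 ≤ ε t)
    (h𝒟 : ∀ t ∈ D, ‖ua t‖ ≤ 𝒟 t) (h𝒟p : ∀ t ∈ D, p (ua t) ≤ 𝒟p t)
    (he : ∀ t ∈ D, ‖e t‖ ≤ ε t)
    (R : ℝ → ℝ) (hRc : ContinuousOn R Dc) (hRnn : ∀ t ∈ Dc, 0 ≤ R t)
    (hRd : ∀ t ∈ Dc,
      (((G * 𝒟 t + K * 𝒟p t) * R t + G * R t ^ 2 + ε t : ℝ) : EReal) ≤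
        diniDerivPlus R t)
    (hR0 : ‖u 0 - ua 0‖ ≤ R 0) :
    ∀ t ∈ Dc, ‖u t - ua t‖ ≤ R t :=
  aposteriori_error_bound_general H p K G hK hG B hB1 hB2 T Tc hTc D hD Dc hDc u ua f e hu hua 𝒟 𝒟p
    ε h𝒟c h𝒟pc h𝒟 h𝒟p he R hRc hRd hR0
end
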